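/- arXiv:1107.0382 — 5 statements merged into one kernel-verified Lean document; each statement's English description precedes it below -/
import Mathlib

section
/- For every function f : ℤ → ℂ, every n ≥ 0, every integer a, and every integer K ≥ 0, one has T₋(a, q_n·K + c_n) = 2·T₋(a, q_{n−1}·K + c_{n−1}) − T₊(a − q_{n−2}·K − c_{n−2}, q_{n−2}·K + c_{n−2}) + S(a − q_{n−2}·K − c_{n−2}, (q_{n−2}+q_{n−1})·K + c_n − c_{n−1}). -/
open Finset

/-- `Q k` is `q_{k-2}` of the paper: `Q 0 = q_{-2} = 1`, `Q 1 = q_{-1} = 1`,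
and `Q (k+2) = 2 * Q (k+1) + Q k`, so that `q_n = Q (n+2)` for `n ≥ -2`. -/
def Q : ℕ → ℤ
  | 0 => 1
  | 1 => 1
  | (k+2) => 2 * Q (k+1) + Q k

/-- `q_n` for `n ≥ 0`. -/
def qn (n : ℕ) : ℤ := Q (n + 2)

/-- `c (k)` is `c_{k-2} = (q_{k-2} - 1)/2` of the paper (the division is exact). -/
def c (k : ℕ) : ℤ := (Q k - 1) / 2

/-- Triangular sum `T₋(x,y) = ∑_{k=1}^{y} (y+1-k)·f(x+k)`. -/
noncomputable def Tm (f : ℤ → ℂ) (x y : ℤ) : ℂ :=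
  ∑ k ∈ Finset.Icc 1 y, ((y + 1 - k : ℤ) : ℂ) * f (x + k)

/-- Triangular sum `T₊(x,y) = ∑_{k=1}^{y} k·f(x+k)`. -/
noncomputable def Tp (f : ℤ → ℂ) (x y : ℤ) : ℂ :=
  ∑ k ∈ Finset.Icc 1 y, ((k : ℤ) : ℂ) * f (x + k)

/-- Square sum `S(x,y) = ∑_{i=x+1}^{x+y} ∑_{j=0}^{y-1} f(i+j)`. -/
noncomputable def Sq (f : ℤ → ℂ) (x y : ℤ) : ℂ :=
  ∑ i ∈ Finset.Icc (x + 1) (x + y), ∑ j ∈ Finset.Icc 0 (y - 1), f (i + j)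

lemma shift_sum (g : ℤ → ℂ) (s t d : ℤ) :
    ∑ k ∈ Icc (s + d) (t + d), g k = ∑ k ∈ Icc s t, g (k + d) := by
  rw [← Finset.map_add_right_Icc, Finset.sum_map]; rfl

lemma Tm_blocks (f : ℤ → ℂ) (a y : ℤ) :
    Tm f a y = ∑ ℓ ∈ Icc 1 y, ∑ k ∈ Icc 1 ℓ, f (a + k) := by
  have h1 : ∀ ℓ ∈ Icc 1 y, ∑ k ∈ Icc 1 ℓ, f (a + k)
      = ∑ k ∈ Icc 1 y, if k ≤ ℓ then f (a + k) else 0 := by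
    intro ℓ hℓ
    simp only [mem_Icc] at hℓ
    calc ∑ k ∈ Icc 1 ℓ, f (a + k)
        = ∑ k ∈ Icc 1 ℓ, if k ≤ ℓ then f (a + k) else 0 :=
          Finset.sum_congr rfl fun k hk => by
            simp only [mem_Icc] at hk; rw [if_pos hk.2]
      _ = ∑ k ∈ Icc 1 y, if k ≤ ℓ then f (a + k) else 0 := by
          refine Finset.sum_subset (Finset.Icc_subset_Icc_right hℓ.2) ?_
          intro k hk hk'
          simp only [mem_Icc] at hk hk'
          rw [if_neg (by omega)]
  rw [Finset.sum_congr rfl h1, Finset.sum_comm]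
  unfold Tm
  refine Finset.sum_congr rfl fun k hk => ?_
  simp only [mem_Icc] at hk
  rw [← Finset.sum_filter]
  have h2 : (Icc 1 y).filter (fun ℓ => k ≤ ℓ) = Icc k y := by
    ext ℓ; simp only [mem_filter, mem_Icc]; omega
  rw [h2, Finset.sum_const, Int.card_Icc, nsmul_eq_mul]
  have h4 : (((y + 1 - k).toNat : ℕ) : ℂ) = ((y + 1 - k : ℤ) : ℂ) := by
    have h5 : (((y + 1 - k).toNat : ℕ) : ℤ) = y + 1 - k := by omega
    exact_mod_cast congrArg (Int.cast : ℤ → ℂ) h5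
  rw [h4]

lemma Tp_blocks (f : ℤ → ℂ) (x y : ℤ) :
    Tp f x y = ∑ j ∈ Icc 0 (y - 1), ∑ k ∈ Icc (j + 1) y, f (x + k) := by
  have h1 : ∀ j ∈ Icc 0 (y - 1), ∑ k ∈ Icc (j + 1) y, f (x + k)
      = ∑ k ∈ Icc 1 y, if j + 1 ≤ k then f (x + k) else 0 := by
    intro j hj
    simp only [mem_Icc] at hj
    calc ∑ k ∈ Icc (j + 1) y, f (x + k)
        = ∑ k ∈ Icc (j + 1) y, if j + 1 ≤ k then f (x + k) else 0 :=
          Finset.sum_congr rfl fun k hk => by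
            simp only [mem_Icc] at hk; rw [if_pos hk.1]
      _ = ∑ k ∈ Icc 1 y, if j + 1 ≤ k then f (x + k) else 0 := by
          refine Finset.sum_subset (Finset.Icc_subset_Icc_left (by omega)) ?_
          intro k hk hk'
          simp only [mem_Icc] at hk hk'
          rw [if_neg (by omega)]
  rw [Finset.sum_congr rfl h1, Finset.sum_comm]
  unfold Tp
  refine Finset.sum_congr rfl fun k hk => ?_
  simp only [mem_Icc] at hk
  rw [← Finset.sum_filter]
  have h2 : (Icc 0 (y - 1)).filter (fun j => j + 1 ≤ k) = Icc 0 (k - 1) := by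
    ext j; simp only [mem_filter, mem_Icc]; omega
  rw [h2, Finset.sum_const, Int.card_Icc, nsmul_eq_mul]
  have h4 : (((k - 1 + 1 - 0).toNat : ℕ) : ℂ) = ((k : ℤ) : ℂ) := by
    have h5 : (((k - 1 + 1 - 0).toNat : ℕ) : ℤ) = k := by omega
    exact_mod_cast congrArg (Int.cast : ℤ → ℂ) h5
  rw [h4]

lemma Sq_blocks (f : ℤ → ℂ) (x w : ℤ) :
    Sq f x w = ∑ j ∈ Icc 0 (w - 1), ∑ k ∈ Icc (j + 1) (j + w), f (x + k) := by
  unfold Sq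
  rw [Finset.sum_comm]
  refine Finset.sum_congr rfl fun j hj => ?_
  have h : Icc (j + 1) (j + w) = Icc ((x + 1) + (j - x)) ((x + w) + (j - x)) := by
    congr 1 <;> ring
  rw [h, shift_sum]
  exact Finset.sum_congr rfl fun i hi => by ring_nf

lemma sum_Ioc_split (g : ℤ → ℂ) {u v w : ℤ} (h1 : u ≤ v) (h2 : v ≤ w) :
    ∑ k ∈ Ioc u v, g k + ∑ k ∈ Ioc v w, g k = ∑ k ∈ Ioc u w, g k := by
  rw [← Finset.sum_union, Finset.Ioc_union_Ioc_eq_Ioc h1 h2]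
  simp only [Finset.disjoint_left, mem_Ioc]; intro x hx hx2; omega

lemma toIoc (s t : ℤ) : Icc s t = Ioc (s - 1) t := by
  ext k; simp only [mem_Icc, mem_Ioc]; omega

lemma key (f : ℤ → ℂ) (a m p : ℤ) (hm : 0 ≤ m) (hp : 0 ≤ p) :
    Tm f a (2 * p + m + 1) = 2 * Tm f a p - Tp f (a - m) m + Sq f (a - m) (m + p + 1) := by
  set F : ℤ → ℂ := fun t => ∑ k ∈ Ioc (-m) t, f (a + k) with hF
  have hIoc : ∀ s t : ℤ, -m ≤ s → s ≤ t →
      ∑ k ∈ Ioc s t, f (a + k) = F t - F s := by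
    intro s t h1 h2
    rw [eq_sub_iff_add_eq, add_comm]
    simp only [hF]
    exact sum_Ioc_split (fun k => f (a + k)) h1 h2
  have hTm : ∀ y : ℤ, 0 ≤ y → Tm f a y = ∑ ℓ ∈ Icc 1 y, (F ℓ - F 0) := by
    intro y hy
    rw [Tm_blocks]
    refine Finset.sum_congr rfl fun ℓ hℓ => ?_
    simp only [mem_Icc] at hℓ
    rw [toIoc 1 ℓ]
    have : (1:ℤ) - 1 = 0 := by norm_num
    rw [this, hIoc 0 ℓ (by omega) (by omega)]
  have hTp : Tp f (a - m) m = ∑ j ∈ Icc 0 (m - 1), (F 0 - F (j - m)) := by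
    rw [Tp_blocks]
    refine Finset.sum_congr rfl fun j hj => ?_
    simp only [mem_Icc] at hj
    have h : Icc (j + 1) m = Icc ((j - m + 1) + m) (0 + m) := by congr 1 <;> ring
    rw [h, shift_sum]
    have h2 : ∀ k ∈ Icc (j - m + 1) 0, f (a - m + (k + m)) = f (a + k) := by
      intro k hk; congr 1; ring
    rw [Finset.sum_congr rfl h2, toIoc (j - m + 1) 0]
    have h3 : j - m + 1 - 1 = j - m := by ring
    rw [h3, hIoc (j - m) 0 (by omega) (by omega)]
  have hSq : Sq f (a - m) (m + p + 1)
      = ∑ j ∈ Icc 0 (m + p), (F (j + p + 1) - F (j - m)) := by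
    rw [Sq_blocks]
    have hb : m + p + 1 - 1 = m + p := by ring
    rw [hb]
    refine Finset.sum_congr rfl fun j hj => ?_
    simp only [mem_Icc] at hj
    have h : Icc (j + 1) (j + (m + p + 1)) = Icc ((j - m + 1) + m) ((j + p + 1) + m) := by
      congr 1 <;> ring
    rw [h, shift_sum]
    have h2 : ∀ k ∈ Icc (j - m + 1) (j + p + 1), f (a - m + (k + m)) = f (a + k) := by
      intro k hk; congr 1; ring
    rw [Finset.sum_congr rfl h2, toIoc (j - m + 1) (j + p + 1)]
    have h3 : j - m + 1 - 1 = j - m := by ring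
    rw [h3, hIoc (j - m) (j + p + 1) (by omega) (by omega)]
  rw [hTm (2 * p + m + 1) (by omega), hTm p hp, hTp, hSq]
  set G : ℤ → ℂ := fun ℓ => F ℓ - F 0 with hG
  have d1 : ∑ ℓ ∈ Icc 1 (2 * p + m + 1), G ℓ
      = ∑ ℓ ∈ Icc 1 p, G ℓ + ∑ ℓ ∈ Icc (p + 1) (2 * p + m + 1), G ℓ := by
    rw [toIoc 1, toIoc 1, toIoc (p + 1)]
    have h1 : (1:ℤ) - 1 = 0 := by norm_num
    have h2 : p + 1 - 1 = p := by ring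
    rw [h1, h2]
    exact (sum_Ioc_split G hp (by omega)).symm
  have d3 : ∑ j ∈ Icc 0 (m + p), G (j + p + 1)
      = ∑ ℓ ∈ Icc (p + 1) (2 * p + m + 1), G ℓ := by
    have h : Icc (p + 1) (2 * p + m + 1) = Icc (0 + (p + 1)) ((m + p) + (p + 1)) := by
      congr 1 <;> ring
    rw [h, shift_sum]
    exact Finset.sum_congr rfl fun j hj => by rw [show j + (p + 1) = j + p + 1 from by ring]
  have d4 : ∑ j ∈ Icc 0 (m + p), G (j - m)
      = ∑ ℓ ∈ Icc (-m) (-1), G ℓ + G 0 + ∑ ℓ ∈ Icc 1 p, G ℓ := by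
    have h : Icc (-m) p = Icc (0 + -m) ((m + p) + -m) := by congr 1 <;> ring
    have h' : ∑ j ∈ Icc 0 (m + p), G (j - m) = ∑ ℓ ∈ Icc (-m) p, G ℓ := by
      rw [h, shift_sum]
      exact Finset.sum_congr rfl fun j hj => by rw [show j + -m = j - m from by ring]
    rw [h', toIoc (-m), toIoc (-m), toIoc 1]
    have e0 : (1:ℤ) - 1 = 0 := by norm_num
    rw [e0]
    have s1 : ∑ ℓ ∈ Ioc (-m - 1) p, G ℓ
        = ∑ ℓ ∈ Ioc (-m - 1) 0, G ℓ + ∑ ℓ ∈ Ioc 0 p, G ℓ :=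
      (sum_Ioc_split G (by omega) hp).symm
    have s2 : ∑ ℓ ∈ Ioc (-m - 1) 0, G ℓ
        = ∑ ℓ ∈ Ioc (-m - 1) (-1), G ℓ + ∑ ℓ ∈ Ioc (-1) 0, G ℓ :=
      (sum_Ioc_split G (by omega) (by omega)).symm
    have s3 : ∑ ℓ ∈ Ioc (-1 : ℤ) 0, G ℓ = G 0 := by
      have : Ioc (-1 : ℤ) 0 = {0} := by ext k; simp only [mem_Ioc, mem_singleton]; omega
      rw [this, Finset.sum_singleton]
    rw [s1, s2, s3]
  have d6 : ∑ j ∈ Icc 0 (m - 1), (F 0 - F (j - m)) = - ∑ ℓ ∈ Icc (-m) (-1), G ℓ := by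
    have h : Icc (-m) (-1) = Icc (0 + -m) ((m - 1) + -m) := by congr 1 <;> ring
    rw [h, shift_sum, ← Finset.sum_neg_distrib]
    refine Finset.sum_congr rfl fun j hj => ?_
    simp only [hG]
    rw [show j + -m = j - m from by ring]
    ring
  have d2 : ∑ j ∈ Icc 0 (m + p), (F (j + p + 1) - F (j - m))
      = ∑ j ∈ Icc 0 (m + p), G (j + p + 1) - ∑ j ∈ Icc 0 (m + p), G (j - m) := by
    rw [← Finset.sum_sub_distrib]
    refine Finset.sum_congr rfl fun j hj => ?_
    simp only [hG]; ring
  rw [d1, d6, d2, d3, d4]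
  ring

lemma Qprop : ∀ k, 1 ≤ Q k ∧ Q k % 2 = 1 := by
  intro k
  induction k using Nat.strong_induction_on with
  | _ k ih =>
    match k with
    | 0 => simp [Q]
    | 1 => simp [Q]
    | (k+2) =>
      have h1 := ih (k+1) (by omega)
      have h0 := ih k (by omega)
      simp only [Q]
      omega

/-- **Lemma 1** (recursion for `T₋`). For `n ≥ 0`, any `a : ℤ` and `K ≥ 0`:
`T₋(a, q_n·K + c_n) = 2·T₋(a, q_{n−1}·K + c_{n−1})
  − T₊(a − q_{n−2}·K − c_{n−2}, q_{n−2}·K + c_{n−2})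
  + S(a − q_{n−2}·K − c_{n−2}, (q_{n−2}+q_{n−1})·K + c_n − c_{n−1})`.
Here `q_{n-2} = Q n`, `q_{n-1} = Q (n+1)`, `q_n = Q (n+2)`, and similarly for `c`. -/
theorem recursion_Tminus (f : ℤ → ℂ) (n : ℕ) (a K : ℤ) (hK : 0 ≤ K) :
    Tm f a (Q (n + 2) * K + c (n + 2)) =
      2 * Tm f a (Q (n + 1) * K + c (n + 1)) -
        Tp f (a - Q n * K - c n) (Q n * K + c n) +
        Sq f (a - Q n * K - c n) ((Q n + Q (n + 1)) * K + c (n + 2) - c (n + 1)) := by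
  have hQ2 : Q (n + 2) = 2 * Q (n + 1) + Q n := rfl
  have h0 := Qprop n
  have h1 := Qprop (n + 1)
  have h2 := Qprop (n + 2)
  have hc0 : 2 * c n = Q n - 1 := by unfold c; omega
  have hc1 : 2 * c (n + 1) = Q (n + 1) - 1 := by unfold c; omega
  have hc2 : 2 * c (n + 2) = Q (n + 2) - 1 := by unfold c; omega
  set m : ℤ := Q n * K + c n with hm'
  set p : ℤ := Q (n + 1) * K + c (n + 1) with hp'
  have hm : 0 ≤ m := add_nonneg (mul_nonneg (by omega) hK) (by omega)
  have hp : 0 ≤ p := add_nonneg (mul_nonneg (by omega) hK) (by omega)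
  have hcd : c (n + 2) = 2 * c (n + 1) + c n + 1 := by omega
  have e1 : Q (n + 2) * K + c (n + 2) = 2 * p + m + 1 := by
    rw [hm', hp']; linear_combination K * hQ2 + hcd
  have e2 : (Q n + Q (n + 1)) * K + c (n + 2) - c (n + 1) = m + p + 1 := by
    rw [hm', hp']; linear_combination hcd
  rw [sub_sub, e1, e2]
  exact key f a m p hm hp
end

section
/- For every function f : ℤ → ℂ, every n ≥ 0, every integer a, and every integer K ≥ 0, one has T₊(a − q_n·K − c_n, q_n·K + c_n) = 2·T₊(a − q_{n−1}·K − c_{n−1}, q_{n−1}·K + c_{n−1}) − T₋(a, q_{n−2}·K + c_{n−2}) + S(a − q_n·K − c_n, (q_{n−2}+q_{n−1})·K + c_n − c_{n−1}). -/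
open Finset

lemma Icc_inter_Icc' (a b p q : ℤ) : Icc a b ∩ Icc p q = Icc (max a p) (min b q) := by
  ext t; simp only [mem_inter, mem_Icc]; omega

lemma Tp_eq (f : ℤ → ℂ) (x y : ℤ) :
    Tp f x y = ∑ t ∈ Icc (x+1) (x+y), ((t - x : ℤ) : ℂ) * f t := by
  unfold Tp
  rw [← Finset.map_add_left_Icc 1 y x, Finset.sum_map]
  simp

lemma Tm_eq (f : ℤ → ℂ) (x y : ℤ) :
    Tm f x y = ∑ t ∈ Icc (x+1) (x+y), ((x + y + 1 - t : ℤ) : ℂ) * f t := by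
  unfold Tm
  rw [← Finset.map_add_left_Icc 1 y x, Finset.sum_map]
  apply Finset.sum_congr rfl
  intro k _
  simp only [addLeftEmbedding_apply]
  congr 1
  push_cast
  ring

lemma Sq_eq (f : ℤ → ℂ) (x y : ℤ) (hy : 1 ≤ y) :
    Sq f x y = ∑ t ∈ Icc (x+1) (x+2*y-1),
      (((min (x+y) t + 1 - max (x+1) (t-y+1)).toNat : ℤ) : ℂ) * f t := by
  unfold Sq
  have step1 : ∀ i ∈ Icc (x+1) (x+y),
      ∑ j ∈ Icc (0:ℤ) (y-1), f (i+j)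
        = ∑ t ∈ Icc (x+1) (x+2*y-1), if i ∈ Icc (t-y+1) t then f t else 0 := by
    intro i hi
    rw [mem_Icc] at hi
    have e1 : ∑ j ∈ Icc (0:ℤ) (y-1), f (i+j) = ∑ t ∈ Icc i (i+y-1), f t := by
      rw [show Icc i (i+y-1) = Icc (i+0) (i+(y-1)) by ring_nf,
        ← Finset.map_add_left_Icc 0 (y-1) i, Finset.sum_map]
      simp
    rw [e1]
    have e2 : ∑ t ∈ Icc (x+1) (x+2*y-1), (if i ∈ Icc (t-y+1) t then f t else 0)
        = ∑ t ∈ Icc (x+1) (x+2*y-1), (if t ∈ Icc i (i+y-1) then f t else 0) := by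
      refine Finset.sum_congr rfl fun t _ => if_congr ?_ rfl rfl
      simp only [mem_Icc]; omega
    rw [e2, Finset.sum_ite_mem, Finset.inter_eq_right.mpr]
    exact Icc_subset_Icc (by omega) (by omega)
  rw [Finset.sum_congr rfl step1, Finset.sum_comm]
  refine Finset.sum_congr rfl fun t _ => ?_
  rw [Finset.sum_ite_mem, Icc_inter_Icc', Finset.sum_const, nsmul_eq_mul]
  congr 1
  rw [Int.card_Icc]
  push_cast
  rfl

lemma main_lemma (f : ℤ → ℂ) (a N0 N1 N2 M : ℤ) (h0 : 0 ≤ N0) (h1 : 0 ≤ N1)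
    (h2 : N2 = 2*N1 + N0 + 1) (hM : M = N2 - N1) :
    Tp f (a - N2) N2 = 2 * Tp f (a - N1) N1 - Tm f a N0 + Sq f (a - N2) M := by
  have hM1 : (1:ℤ) ≤ M := by omega
  set T := Icc (a - N2 + 1) (a + N0) with hT
  have key : ∀ (p q : ℤ) (w : ℤ → ℤ), a - N2 + 1 ≤ p → q ≤ a + N0 →
      ∑ t ∈ Icc p q, ((w t : ℤ) : ℂ) * f t
        = ∑ t ∈ T, (((if p ≤ t ∧ t ≤ q then w t else 0) : ℤ) : ℂ) * f t := by
    intro p q w hp hq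
    have e : ∑ t ∈ T, (((if p ≤ t ∧ t ≤ q then w t else 0) : ℤ) : ℂ) * f t
        = ∑ t ∈ T, (if t ∈ Icc p q then ((w t : ℤ) : ℂ) * f t else 0) := by
      refine Finset.sum_congr rfl fun t _ => ?_
      by_cases h : t ∈ Icc p q
      · rw [mem_Icc] at h; simp [mem_Icc, h.1, h.2]
      · rw [mem_Icc] at h
        rw [if_neg h, if_neg (by rw [mem_Icc]; exact h)]
        simp
    rw [e, Finset.sum_ite_mem, Finset.inter_eq_right.mpr (Icc_subset_Icc hp hq)]
  have E2 : Tp f (a - N2) N2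
      = ∑ t ∈ T, (((if a - N2 + 1 ≤ t ∧ t ≤ a then t - (a - N2) else 0) : ℤ) : ℂ) * f t := by
    rw [Tp_eq, show a - N2 + N2 = a from by ring]
    exact key _ _ (fun t => t - (a - N2)) (by omega) (by omega)
  have E1 : Tp f (a - N1) N1
      = ∑ t ∈ T, (((if a - N1 + 1 ≤ t ∧ t ≤ a then t - (a - N1) else 0) : ℤ) : ℂ) * f t := by
    rw [Tp_eq, show a - N1 + N1 = a from by ring]
    exact key _ _ (fun t => t - (a - N1)) (by omega) (by omega)
  have E0 : Tm f a N0
      = ∑ t ∈ T, (((if a + 1 ≤ t ∧ t ≤ a + N0 then a + N0 + 1 - t else 0) : ℤ) : ℂ) * f t := by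
    rw [Tm_eq]
    exact key _ _ (fun t => a + N0 + 1 - t) (by omega) (by omega)
  have ESq : Sq f (a - N2) M
      = ∑ t ∈ T, (((if a - N2 + 1 ≤ t ∧ t ≤ a + N0 then
          (min (a - N2 + M) t + 1 - max (a - N2 + 1) (t - M + 1)).toNat else 0) : ℤ) : ℂ) * f t := by
    rw [Sq_eq f _ _ hM1, show a - N2 + 2*M - 1 = a + N0 from by omega]
    exact key _ _ (fun t => ((min (a - N2 + M) t + 1 - max (a - N2 + 1) (t - M + 1)).toNat : ℤ))
      (by omega) (by omega)
  rw [E2, E1, E0, ESq, Finset.mul_sum, ← Finset.sum_sub_distrib, ← Finset.sum_add_distrib]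
  refine Finset.sum_congr rfl fun t ht => ?_
  have hw : (if a - N2 + 1 ≤ t ∧ t ≤ a then t - (a - N2) else 0)
      = 2 * (if a - N1 + 1 ≤ t ∧ t ≤ a then t - (a - N1) else 0)
        - (if a + 1 ≤ t ∧ t ≤ a + N0 then a + N0 + 1 - t else 0)
        + (if a - N2 + 1 ≤ t ∧ t ≤ a + N0 then
            ((min (a - N2 + M) t + 1 - max (a - N2 + 1) (t - M + 1)).toNat : ℤ) else 0) := by
    split_ifs <;> omega
  have hc : (((if a - N2 + 1 ≤ t ∧ t ≤ a then t - (a - N2) else 0) : ℤ) : ℂ)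
      = 2 * (((if a - N1 + 1 ≤ t ∧ t ≤ a then t - (a - N1) else 0) : ℤ) : ℂ)
        - (((if a + 1 ≤ t ∧ t ≤ a + N0 then a + N0 + 1 - t else 0) : ℤ) : ℂ)
        + (((if a - N2 + 1 ≤ t ∧ t ≤ a + N0 then
            ((min (a - N2 + M) t + 1 - max (a - N2 + 1) (t - M + 1)).toNat : ℤ) else 0) : ℤ) : ℂ) := by
    rw [hw]; push_cast; ring
  rw [hc]; ring

lemma Q_pos : ∀ k, 1 ≤ Q k
  | 0 => le_refl 1
  | 1 => le_refl 1
  | (k+2) => by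
      have h1 := Q_pos k
      have h2 := Q_pos (k+1)
      show (1:ℤ) ≤ 2 * Q (k+1) + Q k
      omega

lemma Q_odd : ∀ k, Q k % 2 = 1
  | 0 => rfl
  | 1 => rfl
  | (k+2) => by
      have h1 := Q_odd k
      show (2 * Q (k+1) + Q k) % 2 = 1
      omega

lemma two_c (k : ℕ) : 2 * c k = Q k - 1 := by
  have := Q_odd k
  unfold c
  omega

/-- **Lemma 2** (recursion for `T₊`). For `n ≥ 0`, any `a : ℤ` and `K ≥ 0`:
`T₊(a − q_n·K − c_n, q_n·K + c_n) = 2·T₊(a − q_{n−1}·K − c_{n−1}, q_{n−1}·K + c_{n−1})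
  − T₋(a, q_{n−2}·K + c_{n−2}) + S(a − q_n·K − c_n, (q_{n−2}+q_{n−1})·K + c_n − c_{n−1})`.
Here `q_{n-2} = Q n`, `q_{n-1} = Q (n+1)`, `q_n = Q (n+2)`, and similarly for `c`. -/
theorem recursion_Tplus (f : ℤ → ℂ) (n : ℕ) (a K : ℤ) (hK : 0 ≤ K) :
    Tp f (a - Q (n + 2) * K - c (n + 2)) (Q (n + 2) * K + c (n + 2)) =
      2 * Tp f (a - Q (n + 1) * K - c (n + 1)) (Q (n + 1) * K + c (n + 1)) -
        Tm f a (Q n * K + c n) +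
        Sq f (a - Q (n + 2) * K - c (n + 2))
          ((Q n + Q (n + 1)) * K + c (n + 2) - c (n + 1)) := by
  have hq2 : Q (n+2) = 2 * Q (n+1) + Q n := rfl
  have h2c0 := two_c n
  have h2c1 := two_c (n+1)
  have h2c2 := two_c (n+2)
  have hq0 := Q_pos n
  have hq1 := Q_pos (n+1)
  have hN0 : 0 ≤ Q n * K + c n :=
    add_nonneg (mul_nonneg (by omega) hK) (by omega)
  have hN1 : 0 ≤ Q (n+1) * K + c (n+1) :=
    add_nonneg (mul_nonneg (by omega) hK) (by omega)
  have hmul : Q (n+2) * K = 2 * (Q (n+1) * K) + Q n * K := by rw [hq2]; ring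
  have hmul2 : (Q n + Q (n+1)) * K + Q (n+1) * K = Q (n+2) * K := by rw [hq2]; ring
  have hrel : Q (n+2) * K + c (n+2)
      = 2 * (Q (n+1) * K + c (n+1)) + (Q n * K + c n) + 1 := by omega
  have hMrel : (Q n + Q (n+1)) * K + c (n+2) - c (n+1)
      = (Q (n+2) * K + c (n+2)) - (Q (n+1) * K + c (n+1)) := by omega
  simp only [sub_sub]
  exact main_lemma f a (Q n * K + c n) (Q (n+1) * K + c (n+1)) (Q (n+2) * K + c (n+2))
    ((Q n + Q (n+1)) * K + c (n+2) - c (n+1)) hN0 hN1 hrel hMrel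
end

section
/- Let q ≥ 1 be a natural number, let y be an integer with 0 < y < q, let m ≥ 1, let λ_1, …, λ_m ∈ {−1, 1}, and let 0 < x_1 < x_2 < … < x_m be integers such that x_i + y < x_{i+1} for 1 ≤ i < m and x_m + y − x_1 ≤ q. Then for every f ∈ F_{A,B}(q) one has |∑_{i=1}^{m} λ_i·S(x_i, y)| ≤ y·√(B·q·m). -/
open Finset

/-- `f` belongs to the class `F_{A,B}(q)`: it is bounded by `A`, periodic with period `q`,
and satisfies `∑_{n=1}^{q} |∑_{k=1}^{K} f(n+k)|² ≤ B·q·K` for every natural `K ≥ 1`. -/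
def MemF (A B : ℝ) (q : ℕ) (f : ℤ → ℂ) : Prop :=
  (∀ n : ℤ, ‖f n‖ ≤ A) ∧
  (∀ n : ℤ, f (n + (q : ℤ)) = f n) ∧
  (∀ K : ℕ, 1 ≤ K →
    ∑ n ∈ Finset.Icc (1 : ℤ) (q : ℤ),
      (‖∑ k ∈ Finset.Icc (1 : ℤ) (K : ℤ), f (n + k)‖) ^ 2 ≤ B * q * K)

/-!
Put `W n = windowSum f y n = ∑_{k=1}^{y} f (n + k)`. Each `S(x_i, y)` is the sum of `W` over
the block `[x_i, x_i + y)`; the `m` blocks are disjoint and fit in one period window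
`[x_1, x_1 + q)`. By the triangle inequality and Cauchy–Schwarz the sum is at most
`√(m y · ∑_{window} |W|²)`, and by periodicity the window sum is the one bounded by `B q y`
in the definition of `F_{A,B}(q)`.
-/

theorem sum_le_sqrt_card_mul_of_sum_sq_le {ι : Type*} {s : Finset ι} {g : ι → ℝ} {c : ℝ}
    (hg : ∑ i ∈ s, g i ^ 2 ≤ c) : ∑ i ∈ s, g i ≤ √(#s * c) :=
  Real.le_sqrt_of_sq_le <| sq_sum_le_card_mul_sum_sq.trans <|
    mul_le_mul_of_nonneg_left hg (Nat.cast_nonneg _)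

section Chain

variable {α : Type*} [AddCommMonoid α] [PartialOrder α] [IsOrderedAddMonoid α]
  {x : ℕ → α} {y : α} {m : ℕ}

theorem add_lt_of_forall_add_lt_succ (hy : 0 ≤ y)
    (hx : ∀ i, 1 ≤ i → i < m → x i + y < x (i + 1)) {i j : ℕ} (hi : 1 ≤ i) (hij : i < j)
    (hj : j ≤ m) : x i + y < x j := by
  induction j, hij using Nat.le_induction with
  | base => exact hx i hi hj
  | succ j hij ih =>
    calc x i + y < x j := ih (by omega)
      _ ≤ x j + y := le_add_of_nonneg_right hy
      _ < x (j + 1) := hx j (by omega) hj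

theorem le_of_forall_add_lt_succ (hy : 0 ≤ y)
    (hx : ∀ i, 1 ≤ i → i < m → x i + y < x (i + 1)) {i j : ℕ} (hi : 1 ≤ i) (hij : i ≤ j)
    (hj : j ≤ m) : x i ≤ x j := by
  rcases hij.eq_or_lt with rfl | h
  · rfl
  · exact (le_add_of_nonneg_right hy).trans (add_lt_of_forall_add_lt_succ hy hx hi h hj).le

end Chain

theorem Function.Periodic.sum_Ico_add_eq {M : Type*} [AddCancelCommMonoid M] {h : ℤ → M}
    {q : ℕ} (hh : Function.Periodic h q) (a b : ℤ) :
    ∑ n ∈ Ico a (a + q), h n = ∑ n ∈ Ico b (b + q), h n := by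
  set S : ℤ → M := fun c => ∑ n ∈ Ico c (c + q), h n
  have hS : Function.Periodic S 1 := fun c => by
    have key : S (c + 1) + h c = S c + h c :=
      calc S (c + 1) + h c = ∑ n ∈ Ico c (c + q + 1), h n := by
            rw [add_comm, ← add_sum_Ioo_eq_sum_Ico (by omega), ← Ico_add_one_left_eq_Ioo,
              add_right_comm]
        _ = S c + h (c + q) := (sum_Ico_add_eq_sum_Ico_add_one (by omega) h).symm
        _ = S c + h c := by rw [hh]
    exact add_right_cancel key
  simpa using (hS.zsmul a 0).trans (hS.zsmul b 0).symm

noncomputable def windowSum (f : ℤ → ℂ) (K n : ℤ) : ℂ := ∑ k ∈ Icc 1 K, f (n + k)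

theorem Sq_eq_sum_windowSum (f : ℤ → ℂ) (x y : ℤ) :
    Sq f x y = ∑ n ∈ Ico x (x + y), windowSum f y n :=
  sum_nbij' (· - 1) (· + 1) (by simp) (by simp) (by simp) (by simp) fun i _ =>
    sum_nbij' (· + 1) (· - 1) (by simp) (by simp) (by simp) (by simp) (by simp)

theorem Function.Periodic.windowSum {f : ℤ → ℂ} {q : ℤ} (hf : Function.Periodic f q) (K : ℤ) :
    Function.Periodic (windowSum f K) q := fun n => by
  simp only [_root_.windowSum, add_right_comm n q, hf _]

theorem norm_sum_mul_Sq_le {ι : Type*} (s : Finset ι) (c : ι → ℂ) (hc : ∀ i ∈ s, ‖c i‖ ≤ 1)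
    (f : ℤ → ℂ) (x : ι → ℤ) (y : ℤ) :
    ‖∑ i ∈ s, c i * Sq f (x i) y‖ ≤ ∑ i ∈ s, ∑ n ∈ Ico (x i) (x i + y), ‖windowSum f y n‖ :=
  (norm_sum_le _ _).trans <| sum_le_sum fun i hi => by
    rw [norm_mul, Sq_eq_sum_windowSum]
    exact (mul_le_of_le_one_left (norm_nonneg _) (hc i hi)).trans (norm_sum_le _ _)

theorem MemF.sum_sq_norm_windowSum_le {A B : ℝ} {q : ℕ} {f : ℤ → ℂ} (hf : MemF A B q f)
    {K : ℕ} (hK : 1 ≤ K) {s : Finset ℤ} {a : ℤ} (hs : s ⊆ Ico a (a + q)) :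
    ∑ n ∈ s, ‖windowSum f K n‖ ^ 2 ≤ B * q * K := by
  have hper : Function.Periodic (fun n => ‖windowSum f K n‖ ^ 2) q := fun n => by
    simp only [Function.Periodic.windowSum hf.2.1 K n]
  calc ∑ n ∈ s, ‖windowSum f K n‖ ^ 2
      ≤ ∑ n ∈ Ico a (a + q), ‖windowSum f K n‖ ^ 2 :=
        sum_le_sum_of_subset_of_nonneg hs fun _ _ _ => sq_nonneg _
    _ = ∑ n ∈ Icc 1 (q : ℤ), ‖windowSum f K n‖ ^ 2 := by
        rw [hper.sum_Ico_add_eq a 1, add_comm, Ico_add_one_right_eq_Icc]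
    _ ≤ B * q * K := hf.2.2 K hK

section Blocks

variable {x : ℕ → ℤ} {y : ℤ} {m : ℕ}

theorem pairwiseDisjoint_Ico_of_forall_add_lt_succ (hy : 0 ≤ y)
    (hx : ∀ i, 1 ≤ i → i < m → x i + y < x (i + 1)) :
    (Icc 1 m : Set ℕ).PairwiseDisjoint fun i => Ico (x i) (x i + y) := by
  intro i hi j hj hij
  simp only [coe_Icc, Set.mem_Icc] at hi hj
  rw [Function.onFun, disjoint_left]
  intro n hni hnj
  rw [mem_Ico] at hni hnj
  rcases hij.lt_or_gt with h | h
  · linarith [add_lt_of_forall_add_lt_succ hy hx hi.1 h hj.2]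
  · linarith [add_lt_of_forall_add_lt_succ hy hx hj.1 h hi.2]

theorem biUnion_Ico_subset_Ico_of_forall_add_lt_succ (hy : 0 ≤ y)
    (hx : ∀ i, 1 ≤ i → i < m → x i + y < x (i + 1)) :
    (Icc 1 m).biUnion (fun i => Ico (x i) (x i + y)) ⊆ Ico (x 1) (x m + y) := by
  simp only [biUnion_subset_iff_forall_subset, mem_Icc]
  rintro i ⟨hi, him⟩
  exact Ico_subset_Ico (le_of_forall_add_lt_succ hy hx le_rfl hi him)
    (add_le_add_left (le_of_forall_add_lt_succ hy hx hi him le_rfl) y)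

end Blocks

theorem sum_of_squares_bound_general (A B : ℝ) (q : ℕ)
    (f : ℤ → ℂ) (hf : MemF A B q f) (y : ℤ) (hy0 : 0 < y)
    (m : ℕ) (lam : ℕ → ℤ) (hlam : ∀ i, lam i = 1 ∨ lam i = -1)
    (x : ℕ → ℤ)
    (hmono : ∀ i, 1 ≤ i → i < m → x i + y < x (i + 1))
    (hlast : x m + y - x 1 ≤ (q : ℤ)) :
    ‖∑ i ∈ Finset.Icc 1 m, (lam i : ℂ) * Sq f (x i) y‖ ≤
      (y : ℝ) * Real.sqrt (B * q * m) := by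
  lift y to ℕ using hy0.le
  set U := (Icc 1 m).biUnion fun i => Ico (x i) (x i + y)
  have hdisj := pairwiseDisjoint_Ico_of_forall_add_lt_succ (Nat.cast_nonneg y) hmono
  have hU : U ⊆ Ico (x 1) (x 1 + q) :=
    (biUnion_Ico_subset_Ico_of_forall_add_lt_succ (Nat.cast_nonneg y) hmono).trans
      (Ico_subset_Ico_right (by omega))
  have hcard : #U = m * y := by simp [U, card_biUnion hdisj]
  calc ‖∑ i ∈ Icc 1 m, (lam i : ℂ) * Sq f (x i) y‖
      ≤ ∑ i ∈ Icc 1 m, ∑ n ∈ Ico (x i) (x i + y), ‖windowSum f y n‖ :=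
        norm_sum_mul_Sq_le _ _ (fun i _ => by rcases hlam i with h | h <;> simp [h]) f x y
    _ = ∑ n ∈ U, ‖windowSum f y n‖ := (sum_biUnion hdisj).symm
    _ ≤ √(#U * (B * q * y)) :=
        sum_le_sqrt_card_mul_of_sum_sq_le (hf.sum_sq_norm_windowSum_le (by omega) hU)
    _ = (y : ℝ) * √(B * q * m) := by
        rw [hcard, show ((m * y : ℕ) : ℝ) * (B * q * y) = (y : ℝ) ^ 2 * (B * q * m) by
          push_cast; ring, Real.sqrt_mul (sq_nonneg _), Real.sqrt_sq (Nat.cast_nonneg _)]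

/-- **Lemma 5**. Let `0 < y < q`, `λ_i ∈ {−1,1}`, and `0 < x_1 < … < x_m` with
`x_i + y < x_{i+1}` for `1 ≤ i < m` and `x_m + y − x_1 ≤ q`. Then for `f ∈ F_{A,B}(q)`:
`|∑_{i=1}^{m} λ_i·S(x_i, y)| ≤ y·√(B·q·m)`. -/
theorem sum_of_squares_bound (A B : ℝ) (hA : 0 < A) (hB : 0 < B) (q : ℕ) (hq1 : 1 ≤ q)
    (f : ℤ → ℂ) (hf : MemF A B q f) (y : ℤ) (hy0 : 0 < y) (hyq : y < (q : ℤ))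
    (m : ℕ) (hm : 1 ≤ m) (lam : ℕ → ℤ) (hlam : ∀ i, lam i = 1 ∨ lam i = -1)
    (x : ℕ → ℤ) (hx1 : 0 < x 1)
    (hmono : ∀ i, 1 ≤ i → i < m → x i + y < x (i + 1))
    (hlast : x m + y - x 1 ≤ (q : ℤ)) :
    ‖∑ i ∈ Finset.Icc 1 m, (lam i : ℂ) * Sq f (x i) y‖ ≤
      (y : ℝ) * Real.sqrt (B * q * m) :=
  sum_of_squares_bound_general A B q f hf y hy0 m lam hlam x hmono hlast
end

section
/- For every n ≥ 0, p_n = (1/2 + 5√2/16)·(1+√2)^n + (1/2 − 5√2/16)·(1−√2)^n + (n/8)·(1+√2)^{n+2} + (n/8)·(1−√2)^{n+2}. -/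
/-- `P k` is `p_{k-2}` of the paper: `P 0 = p_{-2} = 0`, `P 1 = p_{-1} = 0`,
and `P (k+2) = 2 * P (k+1) + P k + (Q (k+1) + Q k)/2` (the division is exact). -/
def P : ℕ → ℤ
  | 0 => 0
  | 1 => 0
  | (k+2) => 2 * P (k+1) + P k + (Q (k+1) + Q k) / 2

/-- `p_n` for `n ≥ 0`. -/
def pn (n : ℕ) : ℤ := P (n + 2)

lemma Q_even (k : ℕ) : 2 ∣ Q (k + 1) + Q k := by
  induction k with
  | zero => decide
  | succ k ih => show 2 ∣ 2 * Q (k+1) + Q k + Q (k+1); omega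

lemma pn_rec (n : ℕ) :
    (pn (n + 2) : ℝ) = 2 * pn (n + 1) + pn n + ((qn (n + 1) : ℝ) + qn n) / 2 := by
  obtain ⟨c, hc⟩ := Q_even (n + 2)
  rw [show n + 2 + 1 = n + 3 from rfl] at hc
  have h : pn (n + 2) = 2 * pn (n + 1) + pn n + c := by
    show P (n + 4) = 2 * P (n + 3) + P (n + 2) + c
    show 2 * P (n+3) + P (n+2) + (Q (n+3) + Q (n+2)) / 2 = _
    omega
  have hq : (qn (n + 1) : ℝ) + qn n = 2 * c := by
    show ((Q (n+3) : ℝ)) + Q (n+2) = 2 * c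
    exact_mod_cast hc
  rw [h, hq]
  push_cast
  ring

lemma Q_closed (k : ℕ) :
    (2 * Q k : ℝ) = (1 + Real.sqrt 2) ^ k + (1 - Real.sqrt 2) ^ k := by
  set s := Real.sqrt 2 with hsdef
  have hs : s * s = 2 := Real.mul_self_sqrt (by norm_num)
  induction k using Nat.twoStepInduction with
  | zero => norm_num [Q]
  | one => show (2 * (1:ℤ) : ℝ) = _; push_cast; ring
  | more k ih1 ih2 =>
    have hQ : Q (k + 2) = 2 * Q (k + 1) + Q k := by simp [Q]
    rw [hQ]
    push_cast
    push_cast at ih1 ih2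
    simp only [pow_add] at *
    linear_combination 2 * ih2 + ih1 +
      (-((1 + s) ^ k + (1 - s) ^ k)) * hs

lemma qn_closed (n : ℕ) :
    (qn n : ℝ) = ((1 + Real.sqrt 2) ^ (n + 2) + (1 - Real.sqrt 2) ^ (n + 2)) / 2 := by
  have := Q_closed (n + 2)
  show ((Q (n+2) : ℤ) : ℝ) = _
  push_cast at this ⊢
  linarith

/-- Closed form for `p_n`:
`p_n = (1/2 + 5√2/16)·(1+√2)^n + (1/2 − 5√2/16)·(1−√2)^n
      + (n/8)·(1+√2)^{n+2} + (n/8)·(1−√2)^{n+2}` for every `n ≥ 0`. -/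
theorem pn_closed_form (n : ℕ) :
    (pn n : ℝ) =
      (1 / 2 + 5 * Real.sqrt 2 / 16) * (1 + Real.sqrt 2) ^ n +
      (1 / 2 - 5 * Real.sqrt 2 / 16) * (1 - Real.sqrt 2) ^ n +
      ((n : ℝ) / 8) * (1 + Real.sqrt 2) ^ (n + 2) +
      ((n : ℝ) / 8) * (1 - Real.sqrt 2) ^ (n + 2) := by
  set s := Real.sqrt 2 with hsdef
  have hs : s * s = 2 := Real.mul_self_sqrt (by norm_num)
  induction n using Nat.twoStepInduction with
  | zero =>
    have h0 : (pn 0 : ℝ) = 1 := by norm_num [pn, P, Q]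
    rw [h0]; push_cast; ring
  | one =>
    have h1 : (pn 1 : ℝ) = 4 := by norm_num [pn, P, Q]
    rw [h1]; push_cast
    linear_combination (-(11:ℝ)/8) * hs
  | more n ih0 ih1 =>
    rw [pn_rec n, ih0, ih1, qn_closed n, qn_closed (n + 1)]
    push_cast
    simp only [pow_add, pow_one]
    set A := (1 + s) ^ n
    set B := (1 - s) ^ n
    linear_combination
      (-(3:ℝ)/4 * A - 3/4 * B - (n:ℝ)/8 * A - (n:ℝ)/4 * s * A
        - (n:ℝ)/8 * B + (n:ℝ)/4 * s * B - 13/16 * s * A + 13/16 * s * B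
        - (n:ℝ)/8 * s * s * A - (n:ℝ)/8 * s * s * B
        - 1/4 * s * s * A - 1/4 * s * s * B) * hs
end

section
/- The sequence (δ_n)_{n≥0} converges, and lim_{n→∞} δ_n = 1/(4·log(1+√2)). -/
/-- `δ_n = p_n / (q_n · log q_n)`. -/
noncomputable def deltan (n : ℕ) : ℝ := (pn n : ℝ) / ((qn n : ℝ) * Real.log (qn n))

/-!
With `S` the Pell numbers, the recurrences give `4 P k = k Q k - S k` with `0 ≤ S k ≤ Q k`, so
`P k / (k Q k) → 1/4`. With `α = 1 + √2`, the root of `x² = 2x + 1`, induction gives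
`Q k ≤ α ^ k ≤ 4 Q k`, so `log (Q k) / k → log α`. Since `δ_n` is the quotient of these two
sequences at `k = n + 2`, it tends to `1 / (4 log α)`.
-/

open Filter Topology Real

def pellNumber : ℕ → ℤ
  | 0 => 0
  | 1 => 1
  | (k+2) => 2 * pellNumber (k+1) + pellNumber k

lemma Q_odd_s9 (k : ℕ) : Odd (Q k) := by
  induction k using Nat.twoStepInduction with
  | zero => exact odd_one
  | one => exact odd_one
  | more k ih _ =>
    obtain ⟨a, ha⟩ := ih
    exact ⟨Q (k+1) + a, by rw [Q]; omega⟩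

lemma one_le_Q (k : ℕ) : 1 ≤ Q k := by
  induction k using Nat.twoStepInduction with
  | zero => rfl
  | one => rfl
  | more k ih₀ ih₁ => rw [Q]; omega

lemma pellNumber_nonneg (k : ℕ) : 0 ≤ pellNumber k := by
  induction k using Nat.twoStepInduction with
  | zero => rfl
  | one => decide
  | more k ih₀ ih₁ => rw [pellNumber]; omega

lemma pellNumber_le_Q (k : ℕ) : pellNumber k ≤ Q k := by
  induction k using Nat.twoStepInduction with
  | zero => decide
  | one => rfl
  | more k ih₀ ih₁ => rw [pellNumber, Q]; omega

lemma four_mul_P (k : ℕ) : 4 * P k = k * Q k - pellNumber k := by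
  induction k using Nat.twoStepInduction with
  | zero => rfl
  | one => rfl
  | more k ih₀ ih₁ =>
    have hhalf : 2 * ((Q (k+1) + Q k) / 2) = Q (k+1) + Q k :=
      Int.mul_ediv_cancel' ((Q_odd_s9 (k+1)).add_odd (Q_odd_s9 k)).two_dvd
    rw [P, Q, pellNumber]
    push_cast at ih₀ ih₁ ⊢
    linear_combination 2 * ih₁ + ih₀ + 2 * hhalf

lemma one_add_sqrt_two_sq : (1 + √2) ^ 2 = 2 * (1 + √2) + 1 := by
  have h : √2 ^ 2 = 2 := sq_sqrt zero_le_two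
  linear_combination h

lemma one_add_sqrt_two_pow_add_two (k : ℕ) :
    (1 + √2) ^ (k + 2) = 2 * (1 + √2) ^ (k + 1) + (1 + √2) ^ k := by
  rw [pow_add, one_add_sqrt_two_sq]; ring

lemma one_add_sqrt_two_le_four : 1 + √2 ≤ 4 := by
  have : √2 ≤ 3 := sqrt_le_iff.mpr ⟨by norm_num, by norm_num⟩
  linarith

lemma Q_le_one_add_sqrt_two_pow (k : ℕ) : (Q k : ℝ) ≤ (1 + √2) ^ k := by
  induction k using Nat.twoStepInduction with
  | zero => simp [Q]
  | one => simp [Q]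
  | more k ih₀ ih₁ =>
    rw [Q, one_add_sqrt_two_pow_add_two]
    push_cast
    linarith

lemma one_add_sqrt_two_pow_le_four_mul_Q (k : ℕ) : (1 + √2) ^ k ≤ 4 * (Q k : ℝ) := by
  induction k using Nat.twoStepInduction with
  | zero => norm_num [Q]
  | one => simpa [Q] using one_add_sqrt_two_le_four
  | more k ih₀ ih₁ =>
    rw [Q, one_add_sqrt_two_pow_add_two]
    push_cast
    linarith

lemma tendsto_log_div_natCast_of_le_pow_le {x : ℕ → ℝ} {a C : ℝ} (hx : ∀ k, 0 < x k)
    (hle : ∀ k, x k ≤ a ^ k) (hge : ∀ k, a ^ k ≤ C * x k) :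
    Tendsto (fun k : ℕ => log (x k) / k) atTop (𝓝 (log a)) := by
  have ha : 0 < a := by simpa using (hx 1).trans_le (hle 1)
  have hC : 0 < C := pos_of_mul_pos_left ((pow_pos ha 0).trans_le (hge 0)) (hx 0).le
  have hlower : Tendsto (fun k : ℕ => log a - log C / k) atTop (𝓝 (log a)) := by
    simpa using tendsto_const_nhds.sub (tendsto_const_div_atTop_nhds_zero_nat (log C))
  refine tendsto_of_tendsto_of_tendsto_of_le_of_le' hlower tendsto_const_nhds ?_ ?_
  all_goals
    filter_upwards [eventually_gt_atTop 0] with k hk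
    have hk' : (0 : ℝ) < k := Nat.cast_pos.mpr hk
  · have h := log_le_log (pow_pos ha k) (hge k)
    rw [log_pow, log_mul hC.ne' (hx k).ne'] at h
    rw [sub_le_iff_le_add, ← add_div, le_div_iff₀ hk']
    linarith
  · have h := log_le_log (hx k) (hle k)
    rw [log_pow] at h
    rwa [div_le_iff₀ hk', mul_comm]

lemma tendsto_log_Q_div :
    Tendsto (fun k : ℕ => log (Q k) / k) atTop (𝓝 (log (1 + √2))) :=
  tendsto_log_div_natCast_of_le_pow_le (fun k => by exact_mod_cast one_le_Q k)
    Q_le_one_add_sqrt_two_pow one_add_sqrt_two_pow_le_four_mul_Q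

lemma tendsto_P_div :
    Tendsto (fun k : ℕ => (P k : ℝ) / (k * Q k)) atTop (𝓝 (1 / 4)) := by
  have hQ (k : ℕ) : (0 : ℝ) < Q k := by exact_mod_cast one_le_Q k
  have hclosed : ∀ᶠ k : ℕ in atTop,
      (P k : ℝ) / (k * Q k) = 1 / 4 - (pellNumber k / Q k) / k / 4 := by
    filter_upwards [eventually_gt_atTop 0] with k hk
    have h : (4 * P k : ℝ) = k * Q k - pellNumber k := by exact_mod_cast four_mul_P k
    have hk' : (k : ℝ) ≠ 0 := Nat.cast_ne_zero.mpr hk.ne'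
    field_simp [(hQ k).ne']
    linear_combination h
  have hratio : Tendsto (fun k : ℕ => (pellNumber k / Q k : ℝ) / k) atTop (𝓝 0) := by
    refine squeeze_zero (fun k => ?_) (fun k => ?_) tendsto_one_div_atTop_nhds_zero_nat
    · have : (0 : ℝ) ≤ pellNumber k := by exact_mod_cast pellNumber_nonneg k
      have := hQ k
      positivity
    · have : (pellNumber k : ℝ) ≤ Q k := by exact_mod_cast pellNumber_le_Q k
      gcongr
      exact div_le_one_of_le₀ this (hQ k).le
  refine Tendsto.congr' (EventuallyEq.symm hclosed) ?_
  simpa using tendsto_const_nhds.sub (hratio.div_const 4)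

/-- The sequence `δ_n` converges and `lim_{n→∞} δ_n = 1/(4·log(1+√2))`. -/
theorem deltan_tendsto :
    Filter.Tendsto deltan Filter.atTop
      (nhds (1 / (4 * Real.log (1 + Real.sqrt 2)))) := by
  have hlog : log (1 + √2) ≠ 0 :=
    (log_pos (by linarith [sqrt_pos.mpr (zero_lt_two' ℝ)])).ne'
  have hquot : deltan = fun n => (P (n + 2) : ℝ) / ((n + 2 : ℕ) * Q (n + 2)) /
      (log (Q (n + 2)) / (n + 2 : ℕ)) := by
    funext n
    have hk : ((n + 2 : ℕ) : ℝ) ≠ 0 := by positivity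
    rw [deltan, pn, qn]
    field_simp
  rw [hquot, ← div_div]
  exact (tendsto_P_div.div tendsto_log_Q_div hlog).comp (tendsto_add_atTop_nat 2)
end
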